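/- arXiv:2104.07194 — 3 statements merged into one kernel-verified Lean document; each statement's English description precedes it below -/
import Mathlib

section
/- Fix q ∈ (0,1/2) and p̄ > 0. The function f(x) = x · h2((p̄/x) ⋆ q) is strictly increasing on the interval (2p̄, ∞) (the set of x for which p̄/x < 1/2). -/
/-- Binary entropy (base 2), with the conventions `h2 0 = h2 1 = 0`
(automatic since `Real.log 0 = 0`). -/
noncomputable def h2 (y : ℝ) : ℝ := -(y * Real.logb 2 y) - (1 - y) * Real.logb 2 (1 - y)

/-- For `x, y ∈ [0,1]`, `x ⋆ y = x(1−y) + y(1−x)`. -/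
noncomputable def bstar (x y : ℝ) : ℝ := x * (1 - y) + y * (1 - x)

/-!
Writing `t = p̄ / x`, one has `x · h2(t ⋆ q) = p̄ · G(t) / t` with `G(t) = h2(t ⋆ q)`.
Since `t ↦ t ⋆ q` is affine and `h2` is concave, `G` is concave on `[0, 1]`, and `G(0) = h2(q) > 0`.
For such a function the ratio `G(t) / t` is strictly decreasing for `t > 0`: concavity along the
chord from `0` to `t` gives `G(s) ≥ (s/t) G(t) + (1 - s/t) G(0) > (s/t) G(t)` for `0 < s < t`.
As `x ↦ p̄ / x` is strictly decreasing, `x · h2((p̄/x) ⋆ q)` is strictly increasing.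
-/

open Real Set

lemma ConcaveOn.strictAntiOn_div_self {𝕜 : Type*} [Field 𝕜] [LinearOrder 𝕜]
    [IsStrictOrderedRing 𝕜] {s : Set 𝕜} {g : 𝕜 → 𝕜} (hg : ConcaveOn 𝕜 s g) (h0 : (0 : 𝕜) ∈ s)
    (hg0 : 0 < g 0) : StrictAntiOn (fun t => g t / t) (s ∩ Ioi 0) := by
  rintro a ⟨-, ha0 : 0 < a⟩ b ⟨hb, hb0 : 0 < b⟩ hab
  have hchord : a / b * g b + (1 - a / b) * g 0 ≤ g a := by
    have h := hg.2 hb h0 (div_pos ha0 hb0).le (by rw [sub_nonneg, div_le_one hb0]; exact hab.le)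
      (add_sub_cancel _ _)
    simpa [div_mul_cancel₀ a hb0.ne'] using h
  have hrest : 0 < (1 - a / b) * g 0 :=
    mul_pos (by rw [sub_pos, div_lt_one hb0]; exact hab) hg0
  rw [div_lt_div_iff₀ hb0 ha0]
  calc g b * a = (a / b * g b) * b := by field_simp
    _ < g a * b := by gcongr; linarith

lemma h2_eq_binEntropy_div (y : ℝ) : h2 y = binEntropy y / log 2 := by
  simp only [h2, binEntropy, logb, log_inv]
  ring

lemma concaveOn_h2 : ConcaveOn ℝ (Icc 0 1) h2 := by
  have h := strictConcave_binEntropy.concaveOn.smul (inv_nonneg.2 (log_nonneg one_le_two))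
  refine h.congr fun y _ => ?_
  rw [h2_eq_binEntropy_div, div_eq_inv_mul, ← smul_eq_mul]

lemma h2_pos {y : ℝ} (hy₀ : 0 < y) (hy₁ : y < 1) : 0 < h2 y := by
  rw [h2_eq_binEntropy_div]
  exact div_pos (binEntropy_pos hy₀ hy₁) (log_pos one_lt_two)

lemma bstar_eq_lineMap (t q : ℝ) : bstar t q = AffineMap.lineMap q (1 - q) t := by
  rw [AffineMap.lineMap_apply_ring', bstar]
  ring

lemma concaveOn_h2_bstar {q : ℝ} (hq : q ∈ Icc 0 1) :
    ConcaveOn ℝ (Icc 0 1) (fun t => h2 (bstar t q)) := by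
  have h := concaveOn_h2.comp_affineMap (AffineMap.lineMap q (1 - q))
  refine (h.subset ?_ (convex_Icc 0 1)).congr fun t _ => (congrArg h2 (bstar_eq_lineMap t q)).symm
  exact fun t ht => (convex_Icc 0 1).lineMap_mem hq (by constructor <;> linarith [hq.1, hq.2]) ht

/-- For `q ∈ (0,1/2)` and `p̄ > 0`, the function
`f(x) = x · h2((p̄/x) ⋆ q)` is strictly increasing on `(2p̄, ∞)`. -/
theorem strictMonoOn_mul_h2_star (q pbar : ℝ) (hq : q ∈ Set.Ioo (0 : ℝ) (1/2))
    (hpbar : 0 < pbar) :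
    StrictMonoOn (fun x : ℝ => x * h2 (bstar (pbar / x) q)) (Set.Ioi (2 * pbar)) := by
  obtain ⟨hq₀, hq₁⟩ := hq
  have hG₀ : 0 < h2 (bstar 0 q) := by simpa [bstar] using h2_pos hq₀ (by linarith)
  have hratio := (concaveOn_h2_bstar ⟨hq₀.le, by linarith⟩).strictAntiOn_div_self
    ⟨le_rfl, zero_le_one⟩ hG₀
  have hpos : ∀ x ∈ Ioi (2 * pbar), 0 < x := fun x hx => by linarith [mem_Ioi.1 hx]
  have hinv : StrictAntiOn (fun x => pbar / x) (Ioi (2 * pbar)) :=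
    fun a ha b _ hab => div_lt_div_of_pos_left hpbar (hpos a ha) hab
  have hmaps : MapsTo (fun x => pbar / x) (Ioi (2 * pbar)) (Icc 0 1 ∩ Ioi 0) := fun x hx =>
    ⟨⟨(div_pos hpbar (hpos x hx)).le, (div_le_one (hpos x hx)).2 (by linarith [mem_Ioi.1 hx])⟩,
      div_pos hpbar (hpos x hx)⟩
  have hrewrite : ∀ x ∈ Ioi (2 * pbar),
      x * h2 (bstar (pbar / x) q) = pbar * (h2 (bstar (pbar / x) q) / (pbar / x)) := by
    intro x hx
    field_simp [(hpos x hx).ne']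
  intro a ha b hb hab
  simp only [hrewrite a ha, hrewrite b hb]
  exact mul_lt_mul_of_pos_left (hratio.comp hinv hmaps ha hb hab) hpbar
end

section
/- Fix q ∈ [0,1/2). There exists a unique p₀ in the open interval (0,1/2) satisfying the equation 4 + (1+2q)·log₂(p₀ ⋆ q) + (3−2q)·log₂(1 − p₀ ⋆ q) = 0. (Note that p = 1/2 also solves this equation, so the assertion is uniqueness of the solution different from 1/2.) -/
/-!
Substituting `z = p ⋆ q = q + p (1 - 2q)` maps `p ∈ (0, 1/2)` onto `z ∈ (q, 1/2)` and turns
the equation into `ψ(z) = 0`, where `ψ(z) = (1+2q) log z + (3-2q) log (1-z) + 4 log 2`.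
This `ψ` is strictly concave on `(0, 1)` and vanishes at `1/2`, so it has at most one further
zero there. At `a = (1+2q)/4` we have `ψ(a) = 4 (log 2 - H(a)) > 0`, with `H` the binary entropy
in nats, while `ψ` is negative just to the right of `q`: for `q = 0` because `log z → -∞`, and
for `q > 0` because, with `s = 1 - 2q`, `ψ(q) = (2+s) log (1+s) + (2-s) log (1-s)`, whose power
series `∑ₖ (2/(2k+1) - 2/(k+1)) s^(2k+2)` has nonpositive coefficients. The intermediate value
theorem gives the zero in `(q, a)`.
-/

open Set Real Filter Topology

lemma StrictConcaveOn.eq_of_apply_eq_of_lt {s : Set ℝ} {f : ℝ → ℝ} (hf : StrictConcaveOn ℝ s f)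
    {x y b : ℝ} (hx : x ∈ s) (hy : y ∈ s) (hb : b ∈ s) (hxb : x < b) (hyb : y < b)
    (hfx : f x = f b) (hfy : f y = f b) : x = y := by
  by_contra hne
  wlog hxy : x < y generalizing x y
  · exact this hy hx hyb hxb hfy hfx (Ne.symm hne)
      (lt_of_le_of_ne (not_lt.1 hxy) (Ne.symm hne))
  have hseg : y ∈ openSegment ℝ x b := by rw [openSegment_eq_Ioo hxb]; exact ⟨hxy, hyb⟩
  have := hf.lt_on_openSegment hx hb hxb.ne hseg
  simp [hfx, hfy] at this

lemma strictConcaveOn_mul_log_add_mul_log_one_sub {c d : ℝ} (hc : 0 < c) (hd : 0 < d) :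
    StrictConcaveOn ℝ (Ioo 0 1) (fun z ↦ c * log z + d * log (1 - z)) := by
  refine ⟨convex_Ioo 0 1, fun x hx y hy hxy a b ha hb hab ↦ ?_⟩
  have hlog := strictConcaveOn_log_Ioi.2 hx.1 hy.1 hxy ha hb hab
  have hlog' := strictConcaveOn_log_Ioi.2 (sub_pos.2 hx.2) (sub_pos.2 hy.2)
    (by simpa [sub_eq_sub_iff_sub_eq_sub] using hxy) ha hb hab
  have hsum : a • (1 - x) + b • (1 - y) = 1 - (a • x + b • y) := by
    simp only [smul_eq_mul]; linear_combination hab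
  rw [hsum] at hlog'
  simp only [smul_eq_mul] at hlog hlog' ⊢
  nlinarith [mul_lt_mul_of_pos_left hlog hc, mul_lt_mul_of_pos_left hlog' hd]

lemma two_add_mul_log_one_add_add_two_sub_mul_log_one_sub_neg {s : ℝ} (hs0 : s ≠ 0)
    (hs1 : |s| < 1) : (2 + s) * log (1 + s) + (2 - s) * log (1 - s) < 0 := by
  have hodd := (hasSum_log_sub_log_of_abs_lt_one hs1).mul_left s
  have heven := (hasSum_pow_div_log_of_abs_lt_one (x := s ^ 2)
    (by rwa [abs_pow, sq_lt_one_iff₀ (abs_nonneg s)])).mul_left 2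
  have hsplit : log (1 - s ^ 2) = log (1 + s) + log (1 - s) := by
    rw [← log_mul (by linarith [neg_abs_le s]) (by linarith [le_abs_self s])]; ring_nf
  have hsum := hodd.sub heven
  rw [hsplit] at hsum
  refine (hasSum_lt (i := 1) (fun k ↦ ?_) ?_ hsum hasSum_zero).trans_eq' (by ring)
  · have : 2 / (2 * (k : ℝ) + 1) ≤ 2 / (k + 1) := by gcongr; linarith [k.cast_nonneg (α := ℝ)]
    have hpow : 0 ≤ (s ^ 2) ^ (k + 1) := by positivity
    calc _ = (s ^ 2) ^ (k + 1) * (2 / (2 * k + 1) - 2 / (k + 1)) := by ring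
      _ ≤ 0 := mul_nonpos_of_nonneg_of_nonpos hpow (by linarith)
  · norm_num
    nlinarith [pow_pos (sq_pos_of_ne_zero hs0) 2]

noncomputable def psi (q z : ℝ) : ℝ :=
  (1 + 2 * q) * log z + (3 - 2 * q) * log (1 - z) + 4 * log 2

lemma four_add_mul_logb_add_mul_logb_eq_zero_iff (q z : ℝ) :
    4 + (1 + 2 * q) * logb 2 z + (3 - 2 * q) * logb 2 (1 - z) = 0 ↔ psi q z = 0 := by
  have hlog2 : log 2 ≠ 0 := by positivity
  rw [psi, ← mul_left_inj' hlog2, zero_mul]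
  simp only [logb]
  field_simp
  ring_nf

lemma strictConcaveOn_psi {q : ℝ} (hq₁ : -(1 / 2) < q) (hq₂ : q < 3 / 2) :
    StrictConcaveOn ℝ (Ioo 0 1) (psi q) :=
  (strictConcaveOn_mul_log_add_mul_log_one_sub (by linarith) (by linarith)).add_const _

lemma psi_half (q : ℝ) : psi q (1 / 2) = 0 := by
  rw [psi, show (1 : ℝ) - 1 / 2 = 1 / 2 by norm_num, one_div, log_inv]
  ring

lemma psi_pos {q : ℝ} (hq : q ≠ 1 / 2) : 0 < psi q ((1 + 2 * q) / 4) := by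
  set a := (1 + 2 * q) / 4
  have hentropy : psi q a = 4 * (log 2 - binEntropy a) := by
    simp only [psi, binEntropy, log_inv, a]; ring
  have ha : a ≠ 2⁻¹ := by contrapose! hq; simp only [a] at hq; linarith
  rw [hentropy]
  linarith [binEntropy_lt_log_two.2 ha]

lemma psi_self_neg {q : ℝ} (hq₀ : 0 < q) (hq₁ : q < 1) (hq : q ≠ 1 / 2) : psi q q < 0 := by
  set s := 1 - 2 * q
  have hs0 : s ≠ 0 := by simp only [s]; contrapose! hq; linarith
  have hs1 : |s| < 1 := abs_lt.2 ⟨by linarith, by linarith⟩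
  have hq' : q = (1 - s) / 2 := by simp only [s]; ring
  have h1q : 1 - q = (1 + s) / 2 := by simp only [s]; ring
  have hval : psi q q = (2 + s) * log (1 + s) + (2 - s) * log (1 - s) := by
    rw [psi, h1q, log_div (by linarith) two_ne_zero, hq', log_div (by linarith) two_ne_zero]
    ring
  rw [hval]
  exact two_add_mul_log_one_add_add_two_sub_mul_log_one_sub_neg hs0 hs1

lemma exists_psi_neg {q : ℝ} (hq₀ : 0 ≤ q) (hq : q < 1 / 2) :
    ∃ z ∈ Ioo q ((1 + 2 * q) / 4), psi q z < 0 := by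
  rcases hq₀.eq_or_lt with rfl | hq₀
  · refine ⟨1 / 16, by norm_num, ?_⟩
    have h16 : log (1 / 16) = -(4 * log 2) := by
      rw [one_div, log_inv, show (16 : ℝ) = 2 ^ 4 by norm_num, log_pow]; push_cast; ring
    have h15 : log (1 - 1 / 16) < 0 := log_neg (by norm_num) (by norm_num)
    rw [psi, h16]
    linarith
  · have hcont : ContinuousAt (psi q) q :=
      ((strictConcaveOn_psi (by linarith) (by linarith)).concaveOn.continuousOn
        isOpen_Ioo).continuousAt (Ioo_mem_nhds hq₀ (by linarith))
    have hneg : ∀ᶠ z in 𝓝[>] q, psi q z < 0 := nhdsWithin_le_nhds <|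
      hcont.eventually_lt continuousAt_const (psi_self_neg hq₀ (by linarith) hq.ne)
    have hIoo : ∀ᶠ z in 𝓝[>] q, z ∈ Ioo q ((1 + 2 * q) / 4) :=
      Ioo_mem_nhdsGT (by linarith)
    exact (hIoo.and hneg).exists

lemma existsUnique_psi_eq_zero {q : ℝ} (hq₀ : 0 ≤ q) (hq : q < 1 / 2) :
    ∃! z, z ∈ Ioo q (1 / 2) ∧ psi q z = 0 := by
  have hconc := strictConcaveOn_psi (q := q) (by linarith) (by linarith)
  obtain ⟨z₁, hz₁, hneg⟩ := exists_psi_neg hq₀ hq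
  have hcont : ContinuousOn (psi q) (Icc z₁ ((1 + 2 * q) / 4)) :=
    (hconc.concaveOn.continuousOn isOpen_Ioo).mono
      (Icc_subset_Ioo (by linarith [hz₁.1]) (by linarith))
  obtain ⟨z, hz, hroot⟩ := intermediate_value_Ioo hz₁.2.le hcont ⟨hneg, psi_pos hq.ne⟩
  refine ⟨z, ⟨⟨hz₁.1.trans hz.1, by linarith [hz.2]⟩, hroot⟩, ?_⟩
  rintro y ⟨hy, hyroot⟩
  -- `z`, `y` and `1/2` would be three zeros of a strictly concave function
  refine hconc.eq_of_apply_eq_of_lt ?_ ?_ (by norm_num : (1 / 2 : ℝ) ∈ Ioo 0 1) hy.2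
    (by linarith [hz.2]) (by rw [hyroot, psi_half]) (by rw [hroot, psi_half])
  · exact ⟨by linarith [hy.1], by linarith [hy.2]⟩
  · exact ⟨by linarith [hz₁.1, hz.1], by linarith [hz.2]⟩

lemma bstar_eq (p q : ℝ) : bstar p q = q + p * (1 - 2 * q) := by
  rw [bstar]; ring

lemma bstar_mem_Ioo_iff {p q : ℝ} (hq : q < 1 / 2) :
    bstar p q ∈ Ioo q (1 / 2) ↔ p ∈ Ioo 0 (1 / 2) := by
  have hc : 0 < 1 - 2 * q := by linarith
  simp only [mem_Ioo, bstar_eq]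
  constructor
  · rintro ⟨h₁, h₂⟩
    exact ⟨pos_of_mul_pos_left (by linarith) hc.le, by nlinarith⟩
  · rintro ⟨h₁, h₂⟩
    exact ⟨by nlinarith, by nlinarith⟩

lemma bstar_eq_iff {p q z : ℝ} (hq : q ≠ 1 / 2) :
    bstar p q = z ↔ p = (z - q) / (1 - 2 * q) := by
  have hc : 1 - 2 * q ≠ 0 := by contrapose! hq; linarith
  rw [bstar_eq, eq_div_iff hc]
  constructor <;> intro h <;> linarith

/-- For `q ∈ [0,1/2)`, there exists a unique `p₀ ∈ (0,1/2)` with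
`4 + (1+2q)·log₂(p₀ ⋆ q) + (3−2q)·log₂(1 − p₀ ⋆ q) = 0`. -/
theorem existsUnique_p0 (q : ℝ) (hq : q ∈ Set.Ico (0 : ℝ) (1/2)) :
    ∃! p₀ : ℝ, p₀ ∈ Set.Ioo (0 : ℝ) (1/2) ∧
      4 + (1 + 2*q) * Real.logb 2 (bstar p₀ q)
        + (3 - 2*q) * Real.logb 2 (1 - bstar p₀ q) = 0 := by
  obtain ⟨hq₀, hq⟩ := hq
  simp only [four_add_mul_logb_add_mul_logb_eq_zero_iff, ← bstar_mem_Ioo_iff hq]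
  obtain ⟨z, hz, huniq⟩ := existsUnique_psi_eq_zero hq₀ hq
  have hbstar : bstar ((z - q) / (1 - 2 * q)) q = z := (bstar_eq_iff hq.ne).2 rfl
  exact ⟨(z - q) / (1 - 2 * q), by simpa only [hbstar] using hz,
    fun p hp ↦ (bstar_eq_iff hq.ne).1 (huniq _ hp)⟩
end

section
/- Fix q ∈ [0,1/2) and suppose p₀ ∈ (0,1/4) satisfies 4 + (1+2q)·log₂(p₀ ⋆ q) + (3−2q)·log₂(1 − p₀ ⋆ q) = 0. Then the line L(p) = ((1−4p)/(1−4p₀))·(1 − h2(p₀ ⋆ q)) is tangent to the curve g(p) = 1 − h2(p ⋆ q) at p = p₀; that is, L(p₀) = g(p₀) and L'(p₀) = g'(p₀). Equivalently, (1−2q)·log₂((1 − p₀ ⋆ q)/(p₀ ⋆ q)) = 4·(1 − h2(p₀ ⋆ q))/(1 − 4p₀). Moreover, L intersects the p-axis at p = 1/4. -/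
/-!
The curve `g(p) = 1 - h2(p ⋆ q)` has slope `-(1 - 2q)·log₂((1 - t)/t)` at `p₀`, where
`t = p₀ ⋆ q`, since `p ↦ p ⋆ q` is affine with slope `1 - 2q` and `h2' = log₂((1 - y)/y)`.
The hypothesis on `p₀` is, after writing `1 + 2q - 4t = (1 - 4p₀)(1 - 2q)`, exactly the
identity `4(1 - h2 t) = (1 - 4p₀)(1 - 2q)·log₂((1 - t)/t)`, i.e. the slope of the line
through `(p₀, g p₀)` and `(1/4, 0)` equals `g'(p₀)`.
-/

open Real Set

lemma h2_eq_binEntropy_div_log_two : h2 = fun y => binEntropy y / log 2 := by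
  funext y
  simp only [h2, binEntropy, logb, log_inv]
  ring

lemma hasDerivAt_h2 {y : ℝ} (hy₀ : y ≠ 0) (hy₁ : y ≠ 1) :
    HasDerivAt h2 (logb 2 (1 - y) - logb 2 y) y := by
  rw [h2_eq_binEntropy_div_log_two]
  exact ((hasDerivAt_binEntropy hy₀ hy₁).div_const (log 2)).congr_deriv (sub_div _ _ _)

lemma bstar_eq_affine (p q : ℝ) : bstar p q = (1 - 2 * q) * p + q := by
  unfold bstar; ring

lemma hasDerivAt_bstar_left (p q : ℝ) : HasDerivAt (fun p => bstar p q) (1 - 2 * q) p := by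
  simp only [bstar_eq_affine]
  simpa using ((hasDerivAt_id p).const_mul (1 - 2 * q)).add_const q

lemma bstar_mem_Ioo {p q : ℝ} (hp : p ∈ Ioo 0 1) (hq : q ∈ Icc 0 1) : bstar p q ∈ Ioo 0 1 := by
  obtain ⟨hp₀, hp₁⟩ := hp
  obtain ⟨hq₀, hq₁⟩ := hq
  unfold bstar
  -- `p ⋆ q - p(1 - p) = (p - q)² + q(1 - q)`, and symmetrically for `1 - p ⋆ q`
  have hpp : 0 < p * (1 - p) := mul_pos hp₀ (by linarith)
  have hqq : 0 ≤ q * (1 - q) := mul_nonneg hq₀ (by linarith)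
  constructor <;> nlinarith [sq_nonneg (p - q), sq_nonneg (1 - p - q)]

lemma hasDerivAt_one_sub_h2_bstar {p q : ℝ} (h₀ : bstar p q ≠ 0) (h₁ : bstar p q ≠ 1) :
    HasDerivAt (fun p => 1 - h2 (bstar p q))
      (-((1 - 2 * q) * (logb 2 (1 - bstar p q) - logb 2 (bstar p q)))) p := by
  exact (((hasDerivAt_h2 h₀ h₁).comp p (hasDerivAt_bstar_left p q)).const_sub 1).congr_deriv
    (by rw [mul_comm])

lemma four_mul_one_sub_h2_bstar {p q : ℝ}
    (heq : 4 + (1 + 2*q) * logb 2 (bstar p q) + (3 - 2*q) * logb 2 (1 - bstar p q) = 0) :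
    4 * (1 - h2 (bstar p q))
      = (1 - 4 * p) * (1 - 2 * q) * (logb 2 (1 - bstar p q) - logb 2 (bstar p q)) := by
  unfold h2 bstar at *
  linear_combination heq

/-- Fix `q ∈ [0,1/2)` and suppose `p₀ ∈ (0,1/4)` satisfies
`4 + (1+2q)·log₂(p₀ ⋆ q) + (3−2q)·log₂(1 − p₀ ⋆ q) = 0`.  Then the line
`L(p) = ((1−4p)/(1−4p₀))·(1 − h2(p₀ ⋆ q))` is tangent to `g(p) = 1 − h2(p ⋆ q)`
at `p = p₀`: `L(p₀) = g(p₀)` and `L'(p₀) = g'(p₀)`; equivalently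
`(1−2q)·log₂((1 − p₀ ⋆ q)/(p₀ ⋆ q)) = 4·(1 − h2(p₀ ⋆ q))/(1 − 4p₀)`.
Moreover `L(1/4) = 0`. -/
theorem tangent_line (q p₀ : ℝ) (hq : q ∈ Set.Ico (0 : ℝ) (1/2))
    (hp₀ : p₀ ∈ Set.Ioo (0 : ℝ) (1/4))
    (heq : 4 + (1 + 2*q) * Real.logb 2 (bstar p₀ q)
        + (3 - 2*q) * Real.logb 2 (1 - bstar p₀ q) = 0) :
    ((1 - 4*p₀) / (1 - 4*p₀)) * (1 - h2 (bstar p₀ q)) = 1 - h2 (bstar p₀ q) ∧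
    HasDerivAt (fun p : ℝ => ((1 - 4*p) / (1 - 4*p₀)) * (1 - h2 (bstar p₀ q)))
      (-(4 * (1 - h2 (bstar p₀ q)) / (1 - 4*p₀))) p₀ ∧
    HasDerivAt (fun p : ℝ => 1 - h2 (bstar p q))
      (-(4 * (1 - h2 (bstar p₀ q)) / (1 - 4*p₀))) p₀ ∧
    (1 - 2*q) * Real.logb 2 ((1 - bstar p₀ q) / bstar p₀ q)
      = 4 * (1 - h2 (bstar p₀ q)) / (1 - 4*p₀) ∧
    ((1 - 4*(1/4 : ℝ)) / (1 - 4*p₀)) * (1 - h2 (bstar p₀ q)) = 0 := by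
  have h4 : 1 - 4 * p₀ ≠ 0 := by linarith [hp₀.2]
  obtain ⟨ht₀, ht₁⟩ := bstar_mem_Ioo (q := q) ⟨hp₀.1, by linarith [hp₀.2]⟩
    ⟨hq.1, by linarith [hq.2]⟩
  have slope : (1 - 2 * q) * (logb 2 (1 - bstar p₀ q) - logb 2 (bstar p₀ q))
      = 4 * (1 - h2 (bstar p₀ q)) / (1 - 4 * p₀) := by
    rw [four_mul_one_sub_h2_bstar heq, mul_assoc, mul_div_cancel_left₀ _ h4]
  refine ⟨by rw [div_self h4, one_mul], ?_, ?_, ?_, by norm_num⟩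
  · exact ((((hasDerivAt_id p₀).const_mul 4).const_sub 1).div_const (1 - 4 * p₀)
      |>.mul_const (1 - h2 (bstar p₀ q))).congr_deriv (by ring)
  · simpa only [← neg_div, slope] using hasDerivAt_one_sub_h2_bstar ht₀.ne' ht₁.ne
  · rwa [logb_div (by linarith) ht₀.ne']
end
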